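/- Let Λ̃₀ be the Fourier multiplier on 2π-periodic functions defined by (Λ̃₀φ)(t) = Σ_{n≠0} (σ₀(N_κ)(n)/|n| + 1/2) φ̂(n) e^{int}, where σ₀(N_κ)(n) = −(1/2)√(n²−κ²) with κ = κ₁+iε, κ₁,ε > 0 and the branch of the square root chosen so that Im σ₀(N_κ)(n) > 0. Then Λ̃₀ is a bounded linear operator from H^p[0,2π] to H^{p+2}[0,2π] for every p ∈ ℝ. -/

import Mathlib

open MeasureTheory Real Complex Filter Topology

/-- Fourier coefficient of a 2π-periodic function on [0, 2π]. -/
noncomputable def fCoeff (φ : ℝ → ℂ) (m : ℤ) : ℂ :=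
  (1 / (2 * Real.pi) : ℂ) *
    ∫ t in (0:ℝ)..(2 * Real.pi), φ t * Complex.exp (-(Complex.I) * m * t)

/-- Periodic Sobolev norm of order p. -/
noncomputable def sobNorm (p : ℝ) (φ : ℝ → ℂ) : ℝ :=
  (∑' m : ℤ, (1 + (m : ℝ) ^ 2) ^ p * ‖fCoeff φ m‖ ^ 2) ^ (1 / 2 : ℝ)

/-!
With `z = (κ₁ + iε)²`, the relation `s² = n² - z` gives
`-(1/2) s/|n| + 1/2 = z / (2|n|(|n| + s))`, and the branch condition forces `Re s > 0`,
so `|n| ≤ ‖|n| + s‖ ≤ 2|n| + √‖z‖`. Hence the symbol times `1 + n²` lies between two positive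
constants, and the estimate is coefficientwise. The lower bound is needed because `tsum` is `0` on
divergent series: when `φ ∉ H^p` the image must fail to be in `H^{p+2}` as well.
-/

noncomputable def trigSeries (c : ℤ → ℂ) (t : ℝ) : ℂ :=
  ∑' n : ℤ, c n * Complex.exp (Complex.I * n * t)

lemma norm_exp_I_int_mul (k : ℤ) (t : ℝ) : ‖Complex.exp (Complex.I * k * t)‖ = 1 := by
  simp [Complex.norm_exp, Complex.mul_re]

lemma integral_exp_I_int_mul (k : ℤ) :
    ∫ t in (0:ℝ)..(2 * π), Complex.exp (Complex.I * k * t) = if k = 0 then (2 * π : ℂ) else 0 := by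
  split_ifs with hk
  · simp [hk]
  · have hc : Complex.I * k ≠ 0 := mul_ne_zero I_ne_zero (Int.cast_ne_zero.mpr hk)
    rw [integral_exp_mul_complex hc, div_eq_zero_iff, sub_eq_zero]
    left
    rw [ofReal_zero, mul_zero, Complex.exp_zero, ← exp_int_mul_two_pi_mul_I k]
    push_cast
    ring_nf

lemma fCoeff_trigSeries {c : ℤ → ℂ} (hc : Summable fun n => ‖c n‖) (m : ℤ) :
    fCoeff (trigSeries c) m = c m := by
  have hmode : ∀ n : ℤ, ∫ t in (0:ℝ)..(2 * π),
      c n * Complex.exp (Complex.I * n * t) * Complex.exp (-Complex.I * m * t)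
        = if n = m then 2 * π * c m else 0 := by
    intro n
    have hexp : ∀ t : ℝ, c n * Complex.exp (Complex.I * n * t) * Complex.exp (-Complex.I * m * t)
        = c n * Complex.exp (Complex.I * ((n - m : ℤ) : ℂ) * t) := fun t => by
      rw [mul_assoc, ← Complex.exp_add]; push_cast; ring_nf
    simp_rw [hexp, intervalIntegral.integral_const_mul, integral_exp_I_int_mul, sub_eq_zero]
    split_ifs with h <;> simp [h, mul_comm]
  have hsum : HasSum (fun n : ℤ => ∫ t in (0:ℝ)..(2 * π),
      c n * Complex.exp (Complex.I * n * t) * Complex.exp (-Complex.I * m * t))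
      (∫ t in (0:ℝ)..(2 * π), trigSeries c t * Complex.exp (-Complex.I * m * t)) := by
    refine intervalIntegral.hasSum_integral_of_dominated_convergence (μ := volume)
      (F := fun n t => c n * Complex.exp (Complex.I * n * t) * Complex.exp (-Complex.I * m * t))
      (fun n _ => ‖c n‖) (fun n => ?_) ?_ ?_ ?_ ?_
    · exact Continuous.aestronglyMeasurable (by fun_prop)
    · exact fun n => ae_of_all _ fun t _ => by simp [Complex.norm_exp]
    · exact ae_of_all _ fun _ _ => hc
    · exact intervalIntegrable_const
    · refine ae_of_all _ fun t _ => ?_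
      have hterm : Summable fun n : ℤ => c n * Complex.exp (Complex.I * n * t) :=
        summable_norm_iff.mp (by simpa [norm_exp_I_int_mul] using hc)
      exact hterm.hasSum.mul_right _
  simp_rw [hmode] at hsum
  rw [fCoeff, ← (hasSum_ite_eq m _).unique hsum]
  field_simp

lemma trigSeries_of_not_summable {c : ℤ → ℂ} (hc : ¬Summable fun n => ‖c n‖) :
    trigSeries c = 0 := by
  funext t
  refine tsum_eq_zero_of_not_summable fun h => hc ?_
  simpa [norm_exp_I_int_mul] using h.norm

lemma sobNorm_nonneg (p : ℝ) (φ : ℝ → ℂ) : 0 ≤ sobNorm p φ :=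
  Real.rpow_nonneg (tsum_nonneg fun _ => by positivity) _

lemma sobNorm_zero (p : ℝ) : sobNorm p 0 = 0 := by
  simp [sobNorm, fCoeff]

lemma rpow_half_tsum_le_of_le {ι : Type*} {f g : ι → ℝ} {K : ℝ} (hK : 0 ≤ K)
    (hf : ∀ i, 0 ≤ f i) (hfg : ∀ i, f i ≤ K ^ 2 * g i)
    (hsum : Summable f → Summable g) :
    (∑' i, f i) ^ (1 / 2 : ℝ) ≤ K * (∑' i, g i) ^ (1 / 2 : ℝ) := by
  simp only [← Real.sqrt_eq_rpow]
  by_cases hg_sum : Summable g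
  · have hKg : Summable fun i => K ^ 2 * g i := hg_sum.mul_left _
    calc √(∑' i, f i) ≤ √(∑' i, K ^ 2 * g i) :=
          Real.sqrt_le_sqrt (Summable.tsum_le_tsum hfg (hKg.of_nonneg_of_le hf hfg) hKg)
      _ = K * √(∑' i, g i) := by rw [tsum_mul_left, Real.sqrt_mul (sq_nonneg K), Real.sqrt_sq hK]
  · rw [tsum_eq_zero_of_not_summable (mt hsum hg_sum), Real.sqrt_zero]
    positivity

lemma rpow_add_mul_sq {w : ℝ} (hw : 0 < w) (p r x y : ℝ) :
    w ^ (p + r) * (x * y) ^ 2 = (x * w ^ (r / 2)) ^ 2 * (w ^ p * y ^ 2) := by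
  have hsq : (w ^ (r / 2)) ^ 2 = w ^ r := by
    rw [← Real.rpow_natCast, ← Real.rpow_mul hw.le]; norm_num
  rw [Real.rpow_add hw]
  linear_combination (w ^ p * x ^ 2 * y ^ 2) * hsq.symm

theorem sobNorm_trigSeries_mul_fCoeff_le {μ : ℤ → ℂ} {r K δ : ℝ} (hδ : 0 < δ)
    (hub : ∀ m : ℤ, ‖μ m‖ * (1 + (m : ℝ) ^ 2) ^ (r / 2) ≤ K)
    (hlb : ∀ᶠ m in cofinite, δ ≤ ‖μ m‖ * (1 + (m : ℝ) ^ 2) ^ (r / 2)) (p : ℝ) (φ : ℝ → ℂ) :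
    sobNorm (p + r) (trigSeries fun n => μ n * fCoeff φ n) ≤ K * sobNorm p φ := by
  have hK : 0 ≤ K := (hub 0).trans' (by positivity)
  by_cases hc : Summable fun n => ‖μ n * fCoeff φ n‖
  swap
  · rw [trigSeries_of_not_summable hc, sobNorm_zero]
    exact mul_nonneg hK (sobNorm_nonneg p φ)
  have hweight : ∀ m : ℤ, (1 + (m : ℝ) ^ 2) ^ (p + r) * ‖μ m * fCoeff φ m‖ ^ 2
      = (‖μ m‖ * (1 + (m : ℝ) ^ 2) ^ (r / 2)) ^ 2 * ((1 + (m : ℝ) ^ 2) ^ p * ‖fCoeff φ m‖ ^ 2) :=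
    fun m => by rw [norm_mul]; exact rpow_add_mul_sq (by positivity) ..
  unfold sobNorm
  simp only [fCoeff_trigSeries hc]
  refine rpow_half_tsum_le_of_le hK (fun m => by positivity) (fun m => ?_) (fun hsum => ?_)
  · rw [hweight]
    gcongr
    exact hub m
  · refine .of_norm_bounded_eventually (hsum.mul_left (δ ^ 2)⁻¹) (hlb.mono fun m hm => ?_)
    rw [Real.norm_of_nonneg (by positivity), hweight, ← div_eq_inv_mul,
      le_div_iff₀ (by positivity), mul_comm]
    gcongr

section Symbol

variable {z s : ℂ} {a : ℝ}

lemma re_pos_of_sq_eq_sub (hz : 0 < z.im) (hs : s ^ 2 = a ^ 2 - z) (him : s.im < 0) :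
    0 < s.re := by
  have h : 2 * s.re * s.im = -z.im := by
    have := congrArg Complex.im hs
    simp only [sq, mul_im, sub_im, ← ofReal_mul, ofReal_im] at this
    linarith
  nlinarith

lemma half_sub_div_eq (ha : 0 < a) (hre : 0 ≤ s.re) (hs : s ^ 2 = a ^ 2 - z) :
    -(1 / 2 : ℂ) * s / a + 1 / 2 = z / (2 * a * (a + s)) := by
  have ha' : (a : ℂ) ≠ 0 := ofReal_ne_zero.mpr ha.ne'
  have has : (a : ℂ) + s ≠ 0 := fun h => by
    have := congrArg Complex.re h
    simp only [add_re, ofReal_re, zero_re] at this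
    linarith
  field_simp
  linear_combination -hs

lemma le_norm_ofReal_add (hre : 0 ≤ s.re) : a ≤ ‖(a : ℂ) + s‖ :=
  calc a ≤ ((a : ℂ) + s).re := by simp only [add_re, ofReal_re]; linarith
    _ ≤ _ := re_le_norm _

lemma norm_le_add_sqrt_norm (ha : 0 ≤ a) (hs : s ^ 2 = a ^ 2 - z) : ‖s‖ ≤ a + √‖z‖ := by
  have hsq : ‖s‖ ^ 2 ≤ a ^ 2 + ‖z‖ :=
    calc ‖s‖ ^ 2 = ‖(a : ℂ) ^ 2 - z‖ := by rw [← norm_pow, hs]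
      _ ≤ ‖(a : ℂ) ^ 2‖ + ‖z‖ := norm_sub_le _ _
      _ = a ^ 2 + ‖z‖ := by rw [norm_pow, norm_real, Real.norm_of_nonneg ha]
  nlinarith [Real.sq_sqrt (norm_nonneg z), Real.sqrt_nonneg ‖z‖, norm_nonneg s]

lemma norm_half_sub_div_mul_le (ha : 1 ≤ a) (hre : 0 ≤ s.re) (hs : s ^ 2 = a ^ 2 - z) :
    ‖-(1 / 2 : ℂ) * s / a + 1 / 2‖ * (1 + a ^ 2) ≤ ‖z‖ := by
  have hlo : a ≤ ‖(a : ℂ) + s‖ := le_norm_ofReal_add hre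
  rw [half_sub_div_eq (by linarith) hre hs, norm_div, norm_mul, norm_mul, norm_real,
    Real.norm_of_nonneg (by linarith), Complex.norm_two, div_mul_eq_mul_div,
    div_le_iff₀ (by nlinarith)]
  gcongr
  nlinarith

lemma le_norm_half_sub_div_mul (ha : 1 ≤ a) (hre : 0 ≤ s.re) (hs : s ^ 2 = a ^ 2 - z) :
    ‖z‖ / (4 + 2 * √‖z‖) ≤ ‖-(1 / 2 : ℂ) * s / a + 1 / 2‖ * (1 + a ^ 2) := by
  have hlo : a ≤ ‖(a : ℂ) + s‖ := le_norm_ofReal_add hre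
  have hhi : ‖(a : ℂ) + s‖ ≤ 2 * a + √‖z‖ := by
    have := norm_le_add_sqrt_norm (by linarith) hs
    calc ‖(a : ℂ) + s‖ ≤ ‖(a : ℂ)‖ + ‖s‖ := norm_add_le _ _
      _ ≤ 2 * a + √‖z‖ := by rw [norm_real, Real.norm_of_nonneg (by linarith)]; linarith
  have hB := Real.sqrt_nonneg ‖z‖
  rw [half_sub_div_eq (by linarith) hre hs, norm_div, norm_mul, norm_mul, norm_real,
    Real.norm_of_nonneg (by linarith), Complex.norm_two, div_mul_eq_mul_div,
    div_le_div_iff₀ (by positivity) (by nlinarith), mul_assoc ‖z‖ (1 + a ^ 2)]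
  refine mul_le_mul_of_nonneg_left ?_ (norm_nonneg z)
  nlinarith [mul_le_mul_of_nonneg_left hhi (by linarith : 0 ≤ 2 * a),
    mul_nonneg hB (by nlinarith : 0 ≤ a ^ 2 - a)]

end Symbol

lemma norm_symbol_mul_mem_Icc {z s : ℂ} (hz : 0 < z.im) {n : ℤ} (hn : n ≠ 0)
    (hs : s ^ 2 = (n : ℂ) ^ 2 - z) (hbr : 0 < (-(1 / 2 : ℂ) * s).im) :
    ‖-(1 / 2 : ℂ) * s / ((|n| : ℤ) : ℂ) + 1 / 2‖ * (1 + (n : ℝ) ^ 2)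
      ∈ Set.Icc (‖z‖ / (4 + 2 * √‖z‖)) ‖z‖ := by
  have ha : (1 : ℝ) ≤ |(n : ℝ)| := by exact_mod_cast Int.one_le_abs hn
  have hcast : ((|n| : ℤ) : ℂ) = ((|(n : ℝ)| : ℝ) : ℂ) := by
    rw [← Int.cast_abs, ofReal_intCast]
  have hs' : s ^ 2 = ((|(n : ℝ)| : ℝ) : ℂ) ^ 2 - z := by
    rw [hs, ← ofReal_pow, sq_abs, ofReal_pow, ofReal_intCast]
  have him : s.im < 0 := by
    have h : (-(1 / 2 : ℂ) * s).im = -s.im / 2 := by simp [div_eq_mul_inv, mul_comm]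
    linarith
  have hre := (re_pos_of_sq_eq_sub hz hs' him).le
  rw [hcast, ← sq_abs (n : ℝ)]
  exact ⟨le_norm_half_sub_div_mul ha hre hs', norm_half_sub_div_mul_le ha hre hs'⟩

theorem stmt9 (κ₁ ε : ℝ) (hκ₁ : 0 < κ₁) (hε : 0 < ε) (s : ℤ → ℂ)
    (hsq : ∀ n : ℤ, n ≠ 0 → (s n) ^ 2 = (n : ℂ) ^ 2 - ((κ₁ : ℂ) + (ε : ℂ) * Complex.I) ^ 2)
    (hbr : ∀ n : ℤ, n ≠ 0 → 0 < ((-(1 / 2 : ℂ)) * s n).im)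
    (p : ℝ) :
    ∃ C : ℝ, ∀ φ : ℝ → ℂ,
      sobNorm (p + 2)
          (fun t => ∑' n : ℤ,
            (if n = 0 then 0
             else (-(1 / 2 : ℂ)) * s n / ((|n| : ℤ) : ℂ) + 1 / 2) *
              fCoeff φ n * Complex.exp (Complex.I * n * t))
        ≤ C * sobNorm p φ := by
  set z : ℂ := ((κ₁ : ℂ) + (ε : ℂ) * Complex.I) ^ 2
  have hz : 0 < z.im := by simp [z, sq]; positivity
  have hz0 : z ≠ 0 := fun h => by simp [h] at hz
  have hbounds : ∀ n : ℤ, n ≠ 0 →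
      ‖-(1 / 2 : ℂ) * s n / ((|n| : ℤ) : ℂ) + 1 / 2‖ * (1 + (n : ℝ) ^ 2)
        ∈ Set.Icc (‖z‖ / (4 + 2 * √‖z‖)) ‖z‖ := fun n hn =>
    norm_symbol_mul_mem_Icc hz hn (hsq n hn) (hbr n hn)
  refine ⟨‖z‖, fun φ => sobNorm_trigSeries_mul_fCoeff_le (r := 2)
    (δ := ‖z‖ / (4 + 2 * √‖z‖)) (by positivity)
    (fun m => ?_) ?_ p φ⟩
  · rcases eq_or_ne m 0 with rfl | hm
    · simp
    · simpa [hm] using (hbounds m hm).2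
  · filter_upwards [eventually_cofinite_ne 0] with m hm
    simpa [hm] using (hbounds m hm).1
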